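/- Let 0 < r ≤ 1/4. Suppose Λ(x₊) and Λ(y) are positive definite, s := −g(y), and ‖x₊ − y‖_{x₊} ≤ r²/(1 − 2r). Then: (i) ‖x₊ − H(x₊)⁻¹·s‖_{x₊} < r/(r + 1); and (ii) for every s₊ ∈ ℝ^U with ‖x₊ − H(x₊)⁻¹·s₊‖_{x₊} ≤ r/(r + 1) and every y₊ ∈ ℝ^U with Λ(y₊) positive definite and −g(y₊) = s₊, one has ‖x₊ − y₊‖_{x₊} ≤ r. -/

import Mathlib

open Matrix

/-- The gradient of the barrier `f(x) = -log det Λ(x)`: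
`g(x)_i = -tr(Λ(x)⁻¹ · Λ(e_i))` (with the total matrix inverse, `0` for singular matrices). -/
noncomputable def grad {U L : ℕ} (Lam : (Fin U → ℝ) →ₗ[ℝ] Matrix (Fin L) (Fin L) ℝ)
    (x : Fin U → ℝ) : Fin U → ℝ :=
  fun i => -((Lam x)⁻¹ * Lam (Pi.single i 1)).trace

/-- The Hessian of the barrier: `H(x)_{ij} = tr(Λ(x)⁻¹ Λ(e_i) Λ(x)⁻¹ Λ(e_j))`. -/
noncomputable def hess {U L : ℕ} (Lam : (Fin U → ℝ) →ₗ[ℝ] Matrix (Fin L) (Fin L) ℝ)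
    (x : Fin U → ℝ) : Matrix (Fin U) (Fin U) ℝ :=
  Matrix.of fun i j =>
    ((Lam x)⁻¹ * Lam (Pi.single i 1) * (Lam x)⁻¹ * Lam (Pi.single j 1)).trace

/-- The local norm `‖v‖_x = (vᵀ H(x) v)^{1/2}`. -/
noncomputable def locNorm {U L : ℕ} (Lam : (Fin U → ℝ) →ₗ[ℝ] Matrix (Fin L) (Fin L) ℝ)
    (x v : Fin U → ℝ) : ℝ :=
  Real.sqrt (v ⬝ᵥ (hess Lam x).mulVec v)

/-- The dual local norm `‖t‖*_x = (tᵀ H(x)⁻¹ t)^{1/2}`. -/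
noncomputable def dualNorm {U L : ℕ} (Lam : (Fin U → ℝ) →ₗ[ℝ] Matrix (Fin L) (Fin L) ℝ)
    (x t : Fin U → ℝ) : ℝ :=
  Real.sqrt (t ⬝ᵥ (hess Lam x)⁻¹.mulVec t)

/-!
Fix `z` with `Λ(z)` positive definite and simultaneously diagonalise: `Qᵀ Λ(x₊) Q = 1`,
`Qᵀ Λ(z) Q = diag d` with `d > 0`. Writing `M v = Qᵀ Λ(v) Q`, the Hessian form at `x₊` is the
Frobenius pairing `tr (M v * M w)`, so `δ := ‖x₊ - z‖ = ‖1 - d‖₂`. The point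
`w = x₊ - H⁻¹(-g(z))` satisfies `(H w) ⬝ v = tr ((1 - D⁻¹) M v)`, hence by Cauchy–Schwarz
`‖w‖ ≤ ‖1 - d⁻¹‖₂ ≤ δ / (1 - δ)` (as `|1 - dₖ| ≤ δ`) and, pairing with `x₊ - z`,
`∑ (1 - dₖ)² / dₖ ≤ ‖w‖ δ`, which together with `dₖ ≤ 1 + δ` gives `δ ≤ ‖w‖ (1 + δ)`.
Part (i) applies the first bound to `z = y`, part (ii) the second to `z = y₊`.
-/

namespace Matrix

variable {n : Type*} [Fintype n]

section CommRing

variable {R : Type*} [CommRing R]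

lemma trace_mul_mul_mul_comm (B X Y : Matrix n n R) :
    (B * X * B * Y).trace = (B * Y * B * X).trace := by
  rw [mul_assoc _ B Y, mul_assoc _ B X, trace_mul_comm (B * X)]

variable [DecidableEq n]

lemma isUnit_of_transpose_mul_mul_eq_one {A Q : Matrix n n R} (hQ : Qᵀ * A * Q = 1) : IsUnit Q :=
  (isUnit_iff_isUnit_det Q).mpr (isUnit_det_of_left_inverse hQ)

lemma inv_eq_mul_transpose {A Q : Matrix n n R} (hQ : Qᵀ * A * Q = 1) : A⁻¹ = Q * Qᵀ := by
  refine inv_eq_left_inv ?_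
  rw [mul_assoc]
  exact mul_eq_one_comm.mp hQ

lemma inv_eq_mul_inv_transpose_mul_mul {Q : Matrix n n R} (hQ : IsUnit Q) (B : Matrix n n R) :
    B⁻¹ = Q * (Qᵀ * B * Q)⁻¹ * Qᵀ := by
  have hQdet := (isUnit_iff_isUnit_det Q).mp hQ
  have hQtdet : IsUnit Qᵀ.det := by rwa [det_transpose]
  rw [mul_inv_rev, mul_inv_rev, ← mul_assoc, ← mul_assoc, mul_nonsing_inv _ hQdet, one_mul,
    mul_assoc, nonsing_inv_mul _ hQtdet, mul_one]

end CommRing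

lemma trace_mul_eq_sum_mul_of_isSymm {X Y : Matrix n n ℝ} (hY : Y.IsSymm) :
    (X * Y).trace = ∑ p : n × n, X p.1 p.2 * Y p.1 p.2 := by
  simp only [trace, diag, mul_apply, Fintype.sum_prod_type, hY.apply]

lemma trace_mul_le_sqrt_mul_sqrt {X Y : Matrix n n ℝ} (hX : X.IsSymm) (hY : Y.IsSymm) :
    (X * Y).trace ≤ √(X * X).trace * √(Y * Y).trace := by
  simpa only [trace_mul_eq_sum_mul_of_isSymm hX, trace_mul_eq_sum_mul_of_isSymm hY, sq] using
    Real.sum_mul_le_sqrt_mul_sqrt Finset.univ (fun p : n × n => X p.1 p.2) (fun p => Y p.1 p.2)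

lemma trace_mul_self_eq_conjTranspose_mul_self {X : Matrix n n ℝ} (hX : X.IsSymm) :
    (X * X).trace = (Xᴴ * X).trace := by
  rw [conjTranspose_eq_transpose_of_trivial, hX.eq]

lemma trace_mul_self_nonneg {X : Matrix n n ℝ} (hX : X.IsSymm) : 0 ≤ (X * X).trace :=
  trace_mul_self_eq_conjTranspose_mul_self hX ▸ (posSemidef_conjTranspose_mul_self X).trace_nonneg

lemma trace_mul_self_pos {X : Matrix n n ℝ} (hX : X.IsSymm) (h : X ≠ 0) : 0 < (X * X).trace :=
  (trace_mul_self_nonneg hX).lt_of_ne' <| trace_mul_self_eq_conjTranspose_mul_self hX ▸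
    trace_conjTranspose_mul_self_eq_zero_iff.not.mpr h

variable [DecidableEq n]

lemma IsHermitian.exists_transpose_mul_mul_eq_diagonal {A : Matrix n n ℝ} (hA : A.IsHermitian) :
    ∃ V : Matrix n n ℝ, Vᵀ * V = 1 ∧ Vᵀ * A * V = diagonal hA.eigenvalues := by
  refine ⟨hA.eigenvectorUnitary, ?_, ?_⟩
  · rw [← conjTranspose_eq_transpose_of_trivial, ← star_eq_conjTranspose]
    exact Unitary.coe_star_mul_self _
  · have h := hA.conjStarAlgAut_star_eigenvectorUnitary
    rw [Unitary.conjStarAlgAut_apply, Unitary.coe_star, star_star] at h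
    simpa [star_eq_conjTranspose, conjTranspose_eq_transpose_of_trivial] using h

lemma PosDef.exists_transpose_mul_mul_eq_one {A : Matrix n n ℝ} (hA : A.PosDef) :
    ∃ Q : Matrix n n ℝ, Qᵀ * A * Q = 1 := by
  obtain ⟨V, -, hV⟩ := hA.isHermitian.exists_transpose_mul_mul_eq_diagonal
  set a := hA.isHermitian.eigenvalues
  refine ⟨V * diagonal fun k => (√(a k))⁻¹, ?_⟩
  rw [transpose_mul, diagonal_transpose,
    show ∀ D : Matrix n n ℝ, D * Vᵀ * A * (V * D) = D * (Vᵀ * A * V) * D by intro D; noncomm_ring,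
    hV, diagonal_mul_diagonal, diagonal_mul_diagonal, ← diagonal_one]
  congr 1
  funext k
  have ha : 0 < a k := hA.eigenvalues_pos k
  have := Real.sqrt_pos.mpr ha
  field_simp
  rw [Real.sq_sqrt ha.le]

lemma PosDef.exists_simultaneous_diagonalization {A B : Matrix n n ℝ} (hA : A.PosDef)
    (hB : B.PosDef) :
    ∃ (Q : Matrix n n ℝ) (d : n → ℝ), Qᵀ * A * Q = 1 ∧ Qᵀ * B * Q = diagonal d ∧ ∀ k, 0 < d k := by
  obtain ⟨Q₀, hQ₀⟩ := hA.exists_transpose_mul_mul_eq_one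
  have hB' : (Q₀ᵀ * B * Q₀).PosDef := by
    rw [← conjTranspose_eq_transpose_of_trivial]
    exact hB.conjTranspose_mul_mul_same
      (mulVec_injective_iff_isUnit.mpr (isUnit_of_transpose_mul_mul_eq_one hQ₀))
  obtain ⟨V, hVV, hV⟩ := hB'.isHermitian.exists_transpose_mul_mul_eq_diagonal
  refine ⟨Q₀ * V, _, ?_, ?_, hB'.eigenvalues_pos⟩
  · rw [transpose_mul, show Vᵀ * Q₀ᵀ * A * (Q₀ * V) = Vᵀ * (Q₀ᵀ * A * Q₀) * V by noncomm_ring,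
      hQ₀, mul_one, hVV]
  · rw [transpose_mul, ← hV]
    noncomm_ring

end Matrix

section SpectralSums

variable {ι : Type*} [Fintype ι] {d : ι → ℝ} {δ : ℝ}

lemma abs_one_sub_le_of_sum_sq_eq (hsum : ∑ k, (1 - d k) ^ 2 = δ ^ 2) (hδ : 0 ≤ δ) (k : ι) :
    -δ ≤ 1 - d k ∧ 1 - d k ≤ δ :=
  abs_le_of_sq_le_sq' (hsum ▸ Finset.single_le_sum (fun k _ => sq_nonneg (1 - d k))
    (Finset.mem_univ k)) hδ

lemma sum_one_sub_inv_sq_le (hd : ∀ k, 0 < d k) (hsum : ∑ k, (1 - d k) ^ 2 = δ ^ 2)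
    (hδ : 0 ≤ δ) (hδ1 : δ < 1) : ∑ k, (1 - (d k)⁻¹) ^ 2 ≤ (δ / (1 - δ)) ^ 2 := by
  rw [div_pow, ← hsum, Finset.sum_div]
  refine Finset.sum_le_sum fun k _ => ?_
  have hdk : 1 - δ ≤ d k := by linarith [(abs_one_sub_le_of_sum_sq_eq hsum hδ k).2]
  rw [show (1 - (d k)⁻¹) ^ 2 = (1 - d k) ^ 2 / d k ^ 2 by field_simp [(hd k).ne']; ring]
  gcongr

lemma sq_le_mul_sum_sq_div (hd : ∀ k, 0 < d k) (hsum : ∑ k, (1 - d k) ^ 2 = δ ^ 2)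
    (hδ : 0 ≤ δ) : δ ^ 2 ≤ (1 + δ) * ∑ k, (1 - d k) ^ 2 / d k := by
  rw [← hsum, Finset.mul_sum]
  refine Finset.sum_le_sum fun k _ => ?_
  have hdk : d k ≤ 1 + δ := by linarith [(abs_one_sub_le_of_sum_sq_eq hsum hδ k).1]
  rw [mul_div_assoc', le_div_iff₀ (hd k), mul_comm (1 + δ)]
  exact mul_le_mul_of_nonneg_left hdk (sq_nonneg _)

end SpectralSums

lemma lt_one_and_div_one_sub_lt {r δ : ℝ} (hr0 : 0 < r) (hr : r ≤ 1 / 4)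
    (hδ : δ ≤ r ^ 2 / (1 - 2 * r)) : δ < 1 ∧ δ / (1 - δ) < r / (r + 1) := by
  have h2r : 0 < 1 - 2 * r := by linarith
  have hδ' : δ * (1 - 2 * r) ≤ r ^ 2 := (le_div_iff₀ h2r).mp hδ
  have hδ1 : δ < 1 := by nlinarith
  refine ⟨hδ1, (div_lt_div_iff₀ (by linarith) (by linarith)).mpr ?_⟩
  nlinarith

lemma le_of_le_mul_one_add {r δ τ : ℝ} (hr0 : 0 < r) (hδ0 : 0 ≤ δ) (hτ : τ ≤ r / (r + 1))
    (hδ : δ ≤ τ * (1 + δ)) : δ ≤ r := by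
  have h : δ ≤ r / (r + 1) * (1 + δ) := hδ.trans (by gcongr)
  rw [div_mul_eq_mul_div, le_div_iff₀ (by linarith)] at h
  linarith

section Barrier

variable {U L : ℕ} (Lam : (Fin U → ℝ) →ₗ[ℝ] Matrix (Fin L) (Fin L) ℝ)

lemma dotProduct_trace_mul_single (X : Matrix (Fin L) (Fin L) ℝ) (v : Fin U → ℝ) :
    v ⬝ᵥ (fun i => (X * Lam (Pi.single i 1)).trace) = (X * Lam v).trace := by
  let f : (Fin U → ℝ) →ₗ[ℝ] ℝ := traceLinearMap _ ℝ ℝ ∘ₗ LinearMap.mulLeft ℝ X ∘ₗ Lam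
  change ∑ i, v i * f (Pi.single i 1) = f v
  conv_rhs => rw [← Finset.univ_sum_single v]
  rw [map_sum]
  refine Finset.sum_congr rfl fun i _ => ?_
  rw [← smul_eq_mul, ← map_smul, ← Pi.single_smul, smul_eq_mul, mul_one]

lemma dotProduct_grad (z v : Fin U → ℝ) : v ⬝ᵥ grad Lam z = -((Lam z)⁻¹ * Lam v).trace := by
  rw [← dotProduct_trace_mul_single, ← dotProduct_neg]
  rfl

lemma dotProduct_hess_mulVec (x v w : Fin U → ℝ) :
    v ⬝ᵥ hess Lam x *ᵥ w = ((Lam x)⁻¹ * Lam v * (Lam x)⁻¹ * Lam w).trace := by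
  set A := Lam x
  have hrow : hess Lam x *ᵥ w = fun i => ((A⁻¹ * Lam w * A⁻¹) * Lam (Pi.single i 1)).trace := by
    funext i
    rw [mulVec, dotProduct_comm, ← trace_mul_mul_mul_comm]
    exact dotProduct_trace_mul_single Lam (A⁻¹ * Lam (Pi.single i 1) * A⁻¹) w
  rw [hrow, dotProduct_trace_mul_single, trace_mul_mul_mul_comm]

lemma isSymm_hess (x : Fin U → ℝ) : (hess Lam x).IsSymm :=
  IsSymm.ext fun i j => by
    simp only [hess, of_apply, trace_mul_mul_mul_comm _ (Lam (Pi.single j 1))]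

variable {Lam} {x : Fin U → ℝ} {Q : Matrix (Fin L) (Fin L) ℝ}

lemma dotProduct_hess_mulVec_eq_trace (hQ : Qᵀ * Lam x * Q = 1) (v w : Fin U → ℝ) :
    v ⬝ᵥ hess Lam x *ᵥ w = ((Qᵀ * Lam v * Q) * (Qᵀ * Lam w * Q)).trace := by
  rw [dotProduct_hess_mulVec, inv_eq_mul_transpose hQ,
    show Q * Qᵀ * Lam v * (Q * Qᵀ) * Lam w = Q * (Qᵀ * Lam v * Q * (Qᵀ * Lam w)) by noncomm_ring,
    trace_mul_comm]
  simp only [mul_assoc]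

lemma locNorm_eq_sqrt_trace (hQ : Qᵀ * Lam x * Q = 1) (v : Fin U → ℝ) :
    locNorm Lam x v = √((Qᵀ * Lam v * Q) * (Qᵀ * Lam v * Q)).trace := by
  rw [locNorm, dotProduct_hess_mulVec_eq_trace hQ]

lemma isSymm_transpose_mul_mul (hsym : ∀ v, (Lam v).IsSymm) (Q : Matrix (Fin L) (Fin L) ℝ)
    (v : Fin U → ℝ) : (Qᵀ * Lam v * Q).IsSymm := by
  simp only [IsSymm, transpose_mul, transpose_transpose, (hsym v).eq, mul_assoc]

lemma sq_locNorm (hsym : ∀ v, (Lam v).IsSymm) (hQ : Qᵀ * Lam x * Q = 1) (v : Fin U → ℝ) :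
    locNorm Lam x v ^ 2 = v ⬝ᵥ hess Lam x *ᵥ v := by
  refine Real.sq_sqrt ?_
  rw [dotProduct_hess_mulVec_eq_trace hQ]
  exact trace_mul_self_nonneg (isSymm_transpose_mul_mul hsym Q v)

lemma posDef_hess (hinj : Function.Injective Lam) (hsym : ∀ v, (Lam v).IsSymm)
    (hx : (Lam x).PosDef) : (hess Lam x).PosDef := by
  obtain ⟨Q, hQ⟩ := hx.exists_transpose_mul_mul_eq_one
  have hQunit := isUnit_of_transpose_mul_mul_eq_one hQ
  refine posDef_iff_dotProduct_mulVec.mpr ⟨?_, fun v hv => ?_⟩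
  · exact isHermitian_iff_isSymm.mpr (isSymm_hess Lam x)
  · rw [star_trivial, dotProduct_hess_mulVec_eq_trace hQ]
    refine trace_mul_self_pos (isSymm_transpose_mul_mul hsym Q v) fun h0 => hv (hinj ?_)
    rwa [map_zero, ← ((isUnit_transpose Q).mpr hQunit).mul_right_eq_zero,
      ← hQunit.mul_left_eq_zero]

lemma hess_mulVec_add_grad_dotProduct (hQ : Qᵀ * Lam x * Q = 1) (z v : Fin U → ℝ) :
    (hess Lam x *ᵥ x + grad Lam z) ⬝ᵥ v =
      ((1 - (Qᵀ * Lam z * Q)⁻¹) * (Qᵀ * Lam v * Q)).trace := by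
  rw [add_dotProduct, dotProduct_comm, dotProduct_comm (grad Lam z),
    dotProduct_hess_mulVec_eq_trace hQ, hQ, mul_one, dotProduct_grad,
    inv_eq_mul_inv_transpose_mul_mul (isUnit_of_transpose_mul_mul_eq_one hQ) (Lam z), sub_mul,
    one_mul, trace_sub, ← sub_eq_add_neg]
  congr 1
  simp only [mul_assoc]
  rw [trace_mul_comm Q]
  simp only [mul_assoc]

lemma hess_mulVec_sub_inv_mulVec (hH : IsUnit (hess Lam x).det) (s : Fin U → ℝ) :
    hess Lam x *ᵥ (x - (hess Lam x)⁻¹ *ᵥ s) = hess Lam x *ᵥ x - s := by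
  rw [mulVec_sub, mulVec_mulVec, mul_nonsing_inv _ hH, one_mulVec]

variable {z : Fin U → ℝ} {d : Fin L → ℝ}

lemma transpose_mul_map_sub_mul (hQ : Qᵀ * Lam x * Q = 1) (hZ : Qᵀ * Lam z * Q = diagonal d) :
    Qᵀ * Lam (x - z) * Q = diagonal fun k => 1 - d k := by
  rw [map_sub, mul_sub, sub_mul, hQ, hZ, ← diagonal_one, diagonal_sub]

lemma hess_mulVec_add_grad_dotProduct_diagonal (hQ : Qᵀ * Lam x * Q = 1)
    (hZ : Qᵀ * Lam z * Q = diagonal d) (hd : ∀ k, 0 < d k) (v : Fin U → ℝ) :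
    (hess Lam x *ᵥ x + grad Lam z) ⬝ᵥ v =
      ((diagonal fun k => 1 - (d k)⁻¹) * (Qᵀ * Lam v * Q)).trace := by
  have hinv : (diagonal d)⁻¹ = diagonal fun k => (d k)⁻¹ := by
    refine inv_eq_left_inv ?_
    rw [diagonal_mul_diagonal, ← diagonal_one]
    exact congrArg diagonal (funext fun k => inv_mul_cancel₀ (hd k).ne')
  rw [hess_mulVec_add_grad_dotProduct hQ, hZ, hinv, ← diagonal_one, diagonal_sub]

lemma sq_locNorm_sub_eq_sum (hQ : Qᵀ * Lam x * Q = 1) (hZ : Qᵀ * Lam z * Q = diagonal d) :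
    locNorm Lam x (x - z) ^ 2 = ∑ k, (1 - d k) ^ 2 := by
  rw [locNorm_eq_sqrt_trace hQ, transpose_mul_map_sub_mul hQ hZ, diagonal_mul_diagonal,
    trace_diagonal, Real.sq_sqrt (Finset.sum_nonneg fun k _ => mul_self_nonneg _)]
  simp only [sq]

lemma locNorm_newton_le_sqrt_sum (hsym : ∀ v, (Lam v).IsSymm) (hH : IsUnit (hess Lam x).det)
    (hQ : Qᵀ * Lam x * Q = 1) (hZ : Qᵀ * Lam z * Q = diagonal d) (hd : ∀ k, 0 < d k) :
    locNorm Lam x (x - (hess Lam x)⁻¹ *ᵥ -grad Lam z) ≤ √(∑ k, (1 - (d k)⁻¹) ^ 2) := by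
  set w := x - (hess Lam x)⁻¹ *ᵥ -grad Lam z
  set τ := locNorm Lam x w
  have hτ : τ ^ 2 ≤ √(∑ k, (1 - (d k)⁻¹) ^ 2) * τ := calc
    τ ^ 2 = (hess Lam x *ᵥ w) ⬝ᵥ w := by
      rw [sq_locNorm hsym hQ, dotProduct_comm]
    _ = ((diagonal fun k => 1 - (d k)⁻¹) * (Qᵀ * Lam w * Q)).trace := by
      rw [hess_mulVec_sub_inv_mulVec hH, sub_neg_eq_add,
        hess_mulVec_add_grad_dotProduct_diagonal hQ hZ hd]
    _ ≤ √(∑ k, (1 - (d k)⁻¹) ^ 2) * τ := by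
      refine (trace_mul_le_sqrt_mul_sqrt (isSymm_diagonal _)
        (isSymm_transpose_mul_mul hsym Q w)).trans_eq ?_
      simp only [diagonal_mul_diagonal, trace_diagonal, sq, τ, locNorm_eq_sqrt_trace hQ]
  nlinarith [Real.sqrt_nonneg (∑ k, (1 - (d k)⁻¹) ^ 2), Real.sqrt_nonneg (w ⬝ᵥ hess Lam x *ᵥ w)]

lemma sum_sq_div_le_locNorm_newton_mul (hsym : ∀ v, (Lam v).IsSymm)
    (hH : IsUnit (hess Lam x).det)
    (hQ : Qᵀ * Lam x * Q = 1) (hZ : Qᵀ * Lam z * Q = diagonal d) (hd : ∀ k, 0 < d k) :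
    ∑ k, (1 - d k) ^ 2 / d k ≤
      locNorm Lam x (x - (hess Lam x)⁻¹ *ᵥ -grad Lam z) * locNorm Lam x (x - z) := by
  set w := x - (hess Lam x)⁻¹ *ᵥ -grad Lam z
  set D := diagonal fun k => 1 - d k
  have hMsub := transpose_mul_map_sub_mul hQ hZ
  calc ∑ k, (1 - d k) ^ 2 / d k
      = -((hess Lam x *ᵥ w) ⬝ᵥ (x - z)) := by
        rw [hess_mulVec_sub_inv_mulVec hH, sub_neg_eq_add,
          hess_mulVec_add_grad_dotProduct_diagonal hQ hZ hd, hMsub, diagonal_mul_diagonal,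
          trace_diagonal, ← Finset.sum_neg_distrib]
        refine Finset.sum_congr rfl fun k _ => ?_
        field_simp [(hd k).ne']
        ring
    _ = (-D * (Qᵀ * Lam w * Q)).trace := by
        rw [dotProduct_comm, dotProduct_hess_mulVec_eq_trace hQ, hMsub, neg_mul, trace_neg]
    _ ≤ locNorm Lam x w * locNorm Lam x (x - z) := by
        refine (trace_mul_le_sqrt_mul_sqrt (isSymm_diagonal _).neg
          (isSymm_transpose_mul_mul hsym Q w)).trans_eq ?_
        rw [mul_comm, locNorm_eq_sqrt_trace hQ, locNorm_eq_sqrt_trace hQ, hMsub, neg_mul_neg]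

lemma locNorm_newton_le (hinj : Function.Injective Lam) (hsym : ∀ v, (Lam v).IsSymm)
    (hx : (Lam x).PosDef) (hz : (Lam z).PosDef) (hδ : locNorm Lam x (x - z) < 1) :
    locNorm Lam x (x - (hess Lam x)⁻¹ *ᵥ -grad Lam z) ≤
      locNorm Lam x (x - z) / (1 - locNorm Lam x (x - z)) := by
  obtain ⟨Q, d, hQ, hZ, hd⟩ := hx.exists_simultaneous_diagonalization hz
  have hH := (posDef_hess hinj hsym hx).det_pos.ne'.isUnit
  have hδ0 : 0 ≤ locNorm Lam x (x - z) := Real.sqrt_nonneg _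
  have hsum := (sq_locNorm_sub_eq_sum hQ hZ).symm
  calc _ ≤ √(∑ k, (1 - (d k)⁻¹) ^ 2) := locNorm_newton_le_sqrt_sum hsym hH hQ hZ hd
    _ ≤ √((locNorm Lam x (x - z) / (1 - locNorm Lam x (x - z))) ^ 2) :=
      Real.sqrt_le_sqrt (sum_one_sub_inv_sq_le hd hsum hδ0 hδ)
    _ = _ := Real.sqrt_sq (div_nonneg hδ0 (by linarith))

lemma locNorm_sub_le_mul (hinj : Function.Injective Lam) (hsym : ∀ v, (Lam v).IsSymm)
    (hx : (Lam x).PosDef) (hz : (Lam z).PosDef) :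
    locNorm Lam x (x - z) ≤
      locNorm Lam x (x - (hess Lam x)⁻¹ *ᵥ -grad Lam z) * (1 + locNorm Lam x (x - z)) := by
  obtain ⟨Q, d, hQ, hZ, hd⟩ := hx.exists_simultaneous_diagonalization hz
  have hH := (posDef_hess hinj hsym hx).det_pos.ne'.isUnit
  set δ := locNorm Lam x (x - z)
  set τ := locNorm Lam x (x - (hess Lam x)⁻¹ *ᵥ -grad Lam z)
  have hδ0 : 0 ≤ δ := Real.sqrt_nonneg _
  have hτ0 : 0 ≤ τ := Real.sqrt_nonneg _
  have hsum : ∑ k, (1 - d k) ^ 2 = δ ^ 2 := (sq_locNorm_sub_eq_sum hQ hZ).symm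
  have h : δ ^ 2 ≤ (1 + δ) * (τ * δ) := (sq_le_mul_sum_sq_div hd hsum hδ0).trans <|
    mul_le_mul_of_nonneg_left (sum_sq_div_le_locNorm_newton_mul hsym hH hQ hZ hd) (by linarith)
  rcases hδ0.eq_or_lt with hδ | hδ
  · rw [← hδ]
    positivity
  · nlinarith

end Barrier

theorem stmt13_general {U L : ℕ}
    (Lam : (Fin U → ℝ) →ₗ[ℝ] Matrix (Fin L) (Fin L) ℝ)
    (hinj : Function.Injective Lam) (hsym : ∀ v, (Lam v).IsSymm)
    (r : ℝ) (hr0 : 0 < r) (hr : r ≤ 1 / 4)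
    (xp y : Fin U → ℝ) (hxp : (Lam xp).PosDef) (hy : (Lam y).PosDef)
    (s : Fin U → ℝ) (hs : s = -grad Lam y)
    (h : locNorm Lam xp (xp - y) ≤ r ^ 2 / (1 - 2 * r)) :
    locNorm Lam xp (xp - (hess Lam xp)⁻¹.mulVec s) < r / (r + 1) ∧
      ∀ sp yp : Fin U → ℝ,
        locNorm Lam xp (xp - (hess Lam xp)⁻¹.mulVec sp) ≤ r / (r + 1) →
        (Lam yp).PosDef → -grad Lam yp = sp →
        locNorm Lam xp (xp - yp) ≤ r := by
  obtain ⟨hδ1, hδr⟩ := lt_one_and_div_one_sub_lt hr0 hr h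
  refine ⟨?_, fun sp yp hsp hyp hgrad => ?_⟩
  · rw [hs]
    exact (locNorm_newton_le hinj hsym hxp hy hδ1).trans_lt hδr
  · subst hgrad
    exact le_of_le_mul_one_add hr0 (Real.sqrt_nonneg _) hsp
      (locNorm_sub_le_mul hinj hsym hxp hyp)

/-- the bound update is well defined and preserves the invariant:
(i) `‖x₊ − H(x₊)⁻¹s‖_{x₊} < r/(r+1)`; (ii) whenever
`‖x₊ − H(x₊)⁻¹s₊‖_{x₊} ≤ r/(r+1)` and `y₊` is the gradient certificate of `s₊`,
one has `‖x₊ − y₊‖_{x₊} ≤ r`. -/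
theorem stmt13 {U L : ℕ} (hU : 0 < U) (hL : 0 < L)
    (Lam : (Fin U → ℝ) →ₗ[ℝ] Matrix (Fin L) (Fin L) ℝ)
    (hinj : Function.Injective Lam) (hsym : ∀ v, (Lam v).IsSymm)
    (r : ℝ) (hr0 : 0 < r) (hr : r ≤ 1 / 4)
    (xp y : Fin U → ℝ) (hxp : (Lam xp).PosDef) (hy : (Lam y).PosDef)
    (s : Fin U → ℝ) (hs : s = -grad Lam y)
    (h : locNorm Lam xp (xp - y) ≤ r ^ 2 / (1 - 2 * r)) :
    locNorm Lam xp (xp - (hess Lam xp)⁻¹.mulVec s) < r / (r + 1) ∧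
      ∀ sp yp : Fin U → ℝ,
        locNorm Lam xp (xp - (hess Lam xp)⁻¹.mulVec sp) ≤ r / (r + 1) →
        (Lam yp).PosDef → -grad Lam yp = sp →
        locNorm Lam xp (xp - yp) ≤ r :=
  stmt13_general Lam hinj hsym r hr0 hr xp y hxp hy s hs h
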